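/- Let r₁: l₁ → m₁ and r₂: l₂ → m₂ be rules of a reduced rewriting system. If pre(l₂) ∩ suf(l₁) = ∅ or pre(l₁) ∩ suf(l₂) = ∅, then for every word w such that l₁ occurs in some cyclic conjugate of w and l₂ occurs in some cyclic conjugate of w, there exists a single cyclic conjugate w̃ of w in which both l₁ and l₂ occur. -/
import Mathlib


/-- `u` and `v` are cyclic conjugates in the free monoid `Σ*`. -/
def CycConj {α : Type*} (u v : List α) : Prop :=
  ∃ x y : List α, u = x ++ y ∧ v = y ++ x

/-- One rewriting step of the rewriting system `R`. -/
def Step {α : Type*} (R : List α → List α → Prop) (u v : List α) : Prop :=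
  ∃ l r x y : List α, R l r ∧ u = x ++ l ++ y ∧ v = x ++ r ++ y

/-- One cyclic reduction step: some cyclic conjugate of `u` rewrites to `v`. -/
def CycStep {α : Type*} (R : List α → List α → Prop) (u v : List α) : Prop :=
  ∃ w : List α, CycConj u w ∧ Step R w v

/-- `u` is cyclically irreducible: `u` and all its cyclic conjugates are irreducible. -/
def CycIrred {α : Type*} (R : List α → List α → Prop) (u : List α) : Prop :=
  ∀ w : List α, CycConj u w → ∀ v : List α, ¬ Step R w v

/-- Equality in the monoid presented by the rewriting system `R`. -/
def MEq {α : Type*} (R : List α → List α → Prop) : List α → List α → Prop :=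
  Relation.EqvGen (Step R)

/-- `u ≡_M v` : `u` and `v` are left and right conjugates in the monoid presented by `R`. -/
def MConj {α : Type*} (R : List α → List α → Prop) (u v : List α) : Prop :=
  ∃ x y : List α, MEq R (u ++ x) (x ++ v) ∧ MEq R (y ++ u) (v ++ y)

/-- `R` is reduced. -/
def Reduced {α : Type*} (R : List α → List α → Prop) : Prop :=
  ∀ l r : List α, R l r → (∀ v : List α, ¬ Step R r v) ∧
    ∀ l' r' x y : List α, R l' r' → l = x ++ l' ++ y → x = [] ∧ y = []

private lemma cycConj_iff_isRotated {α : Type*} {u v : List α} :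
    CycConj u v ↔ u ~r v := by
  constructor
  · rintro ⟨x, y, rfl, rfl⟩
    exact ⟨x.length, List.rotate_append_length_eq x y⟩
  · intro h
    obtain ⟨n, hn, h⟩ := List.isRotated_iff_mod.mp h
    exact ⟨u.take n, u.drop n, (List.take_append_drop n u).symm,
      by rw [← h, List.rotate_eq_drop_append_take hn]⟩

private lemma key {α : Type*} (R : List α → List α → Prop)
    (hred : Reduced R) (l₁ m₁ l₂ m₂ : List α) (h₁ : R l₁ m₁) (h₂ : R l₂ m₂)
    (hL : ∀ p : List α, p ≠ [] → p <+: l₂ → ¬ p <:+ l₁)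
    (w w₁ w₂ x₁ y₁ x₂ y₂ : List α) (hc₁ : CycConj w w₁) (hc₂ : CycConj w w₂)
    (e₁ : w₁ = x₁ ++ l₁ ++ y₁) (e₂ : w₂ = x₂ ++ l₂ ++ y₂) :
    ∃ wt : List α, CycConj w wt ∧ (∃ x y : List α, wt = x ++ l₁ ++ y) ∧
      (∃ x y : List α, wt = x ++ l₂ ++ y) := by
  -- rotate so that l₁ is at the end
  set wt : List α := y₁ ++ (x₁ ++ l₁) with hwt
  have hcwt : CycConj w wt := by
    rw [cycConj_iff_isRotated] at *
    exact (hc₁.trans (cycConj_iff_isRotated.mp ⟨x₁ ++ l₁, y₁, by simp [e₁], rfl⟩))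
  have hc : CycConj wt w₂ := by
    rw [cycConj_iff_isRotated] at *
    exact hcwt.symm.trans hc₂
  obtain ⟨c, d, hcd, hdc⟩ := hc
  -- wt = c ++ d, w₂ = d ++ c = x₂ ++ l₂ ++ y₂
  rw [e₂] at hdc
  refine ⟨wt, hcwt, ⟨y₁ ++ x₁, [], by simp [hwt]⟩, ?_⟩
  rcases le_or_gt d.length x₂.length with hd | hd
  · -- d is a prefix of x₂
    have hx : d <+: x₂ := by
      have h1 : d <+: x₂ ++ (l₂ ++ y₂) := ⟨c, by rw [← List.append_assoc, ← hdc]⟩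
      exact (List.isPrefix_append_of_length hd).mp h1
    obtain ⟨e, he⟩ := hx
    have hc' : c = e ++ l₂ ++ y₂ := by
      have := hdc
      rw [← he] at this
      simpa using this.symm
    exact ⟨e, y₂ ++ d, by rw [hcd, hc']; simp⟩
  rcases le_or_gt (x₂.length + l₂.length) d.length with hd2 | hd2
  · -- x₂ ++ l₂ is a prefix of d
    have h1 : x₂ ++ l₂ <+: d := by
      have hp1 : x₂ ++ l₂ <+: d ++ c := ⟨y₂, by rw [← hdc]⟩
      exact List.prefix_of_prefix_length_le hp1 (d.prefix_append c) (by simp [hd2])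
    obtain ⟨t, ht⟩ := h1
    exact ⟨c ++ x₂, t, by rw [hcd, ← ht]; simp⟩
  · -- l₂ straddles the boundary: contradiction
    exfalso
    have hx : x₂ <+: d := by
      have h1 : x₂ <+: d ++ c := ⟨l₂ ++ y₂, by rw [← hdc]; simp⟩
      exact List.prefix_of_prefix_length_le h1 (d.prefix_append c) (le_of_lt hd)
    obtain ⟨p, hp⟩ := hx
    have hplen : p.length = d.length - x₂.length := by
      have := congrArg List.length hp; simp at this; omega
    have hpne : p ≠ [] := by
      intro h; rw [h] at hplen; simp at hplen; omega
    -- p is a prefix of l₂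
    have hpl₂ : p <+: l₂ := by
      have h1 : p ++ c = l₂ ++ y₂ := by
        have := hdc
        rw [← hp] at this
        simpa using this.symm
      have h2 : p <+: l₂ ++ y₂ := ⟨c, h1⟩
      exact (List.isPrefix_append_of_length (by omega)).mp h2
    -- p is a suffix of wt = (y₁ ++ x₁) ++ l₁
    have hpwt : p <:+ wt := by
      rw [hcd, ← hp]
      exact (List.suffix_append x₂ p).trans (List.suffix_append c (x₂ ++ p))
    have hl₁wt : l₁ <:+ wt := ⟨y₁ ++ x₁, by simp [hwt]⟩
    rcases le_or_gt p.length l₁.length with hpl | hpl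
    · exact hL p hpne hpl₂ (List.suffix_of_suffix_length_le hpwt hl₁wt hpl)
    · -- l₁ is a proper factor of l₂ : contradicts reducedness
      have hl₁p : l₁ <:+ p := List.suffix_of_suffix_length_le hl₁wt hpwt (le_of_lt hpl)
      obtain ⟨a, ha⟩ := hl₁p
      obtain ⟨q, hq⟩ := hpl₂
      have hqne : q ≠ [] := by
        intro h
        rw [h, List.append_nil] at hq
        have := congrArg List.length hq
        omega
      have := (hred l₂ m₂ h₂).2 l₁ m₁ a q h₁ (by rw [← hq, ← ha])
      exact hqne this.2

/-- if no nonempty prefix of one left-hand side is a suffix of the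
other (in one of the two orders), then any word whose cyclic conjugates contain
`l₁` and `l₂` has a single cyclic conjugate containing both. -/
theorem cdefined_of_empty_overlap {α : Type*} (R : List α → List α → Prop)
    (hred : Reduced R) (l₁ m₁ l₂ m₂ : List α) (h₁ : R l₁ m₁) (h₂ : R l₂ m₂)
    (hdisj : (∀ p : List α, p ≠ [] → p <+: l₂ → ¬ p <:+ l₁) ∨
             (∀ p : List α, p ≠ [] → p <+: l₁ → ¬ p <:+ l₂))
    (w w₁ w₂ : List α) (hc₁ : CycConj w w₁) (hc₂ : CycConj w w₂)
    (ho₁ : ∃ x y : List α, w₁ = x ++ l₁ ++ y)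
    (ho₂ : ∃ x y : List α, w₂ = x ++ l₂ ++ y) :
    ∃ wt : List α, CycConj w wt ∧ (∃ x y : List α, wt = x ++ l₁ ++ y) ∧
      (∃ x y : List α, wt = x ++ l₂ ++ y) := by
  obtain ⟨x₁, y₁, e₁⟩ := ho₁
  obtain ⟨x₂, y₂, e₂⟩ := ho₂
  rcases hdisj with hL | hR
  · exact key R hred l₁ m₁ l₂ m₂ h₁ h₂ hL w w₁ w₂ x₁ y₁ x₂ y₂ hc₁ hc₂ e₁ e₂
  · obtain ⟨wt, hcwt, ha, hb⟩ :=
      key R hred l₂ m₂ l₁ m₁ h₂ h₁ hR w w₂ w₁ x₂ y₂ x₁ y₁ hc₂ hc₁ e₂ e₁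
    exact ⟨wt, hcwt, hb, ha⟩
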